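/- arXiv:2101.00801 — 4 statements merged into one kernel-verified Lean document; each statement's English description precedes it below -/
import Mathlib

section
/- Let f : ℕ → (0,∞) satisfy f(n) = O(n^{-∞}). Then there exists a function g : ℕ → (0,∞) with f(n) ≤ g(n) for all n, g monotonically decreasing, g(n) = O(n^{-∞}), and g reproducing in the sense that sup_{j,k ∈ ℤ} Σ_{l ∈ ℤ} g(|j-l|)·g(|l-k|) / g(|j-k|) < ∞. -/
/-!
Put `h n = f n * (1 + n) ^ 2` and `U n = log (K / h n)`, with `K` so large that `U ≥ 1`; rapid
decay of `f` says that `U n` eventually exceeds every multiple of `log n`. The largest monotone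
subadditive minorant `V` of `U` keeps this growth, since a covering of `n` by parts either has at
least `√n` parts, each costing at least `1`, or has a part larger than `√n`. Then
`g n = K * exp (-V n) / (1 + n) ^ 2` dominates `f`, decreases and decays rapidly, and subadditivity
of `V` together with `1 + a + b ≤ (1 + a) + (1 + b)` gives `g a * g b ≤ g (a + b) * (q a + q b)`
for a summable `q n = 2 * K / (1 + n) ^ 2`. As `g` decreases and `|j - k| ≤ |j - l| + |l - k|`,
the `l`-th term of the reproducing sum is at most `q |j - l| + q |l - k|`, whose sum over `l`
does not depend on `j` and `k`.
-/

open Real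

def RapidDecay (f : ℕ → ℝ) : Prop :=
  ∀ m : ℕ, ∃ C : ℝ, ∀ n : ℕ, 1 ≤ n → f n ≤ C * (n : ℝ) ^ (-(m : ℝ))

namespace RapidDecay

variable {f : ℕ → ℝ}

lemma mul_one_add_sq (hf : RapidDecay f) (hf₀ : ∀ n, 0 ≤ f n) :
    RapidDecay fun n => f n * (1 + n) ^ 2 := by
  intro m
  obtain ⟨C, hC⟩ := hf (m + 2)
  refine ⟨4 * C, fun n hn => ?_⟩
  have hn' : (1 : ℝ) ≤ n := by exact_mod_cast hn
  have hpow : (n : ℝ) ^ (-((m + 2 : ℕ) : ℝ)) * n ^ 2 = n ^ (-(m : ℝ)) := by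
    rw [← rpow_natCast _ 2, ← rpow_add (by linarith)]
    push_cast
    ring_nf
  calc f n * (1 + n) ^ 2 ≤ f n * (4 * n ^ 2) := by
        gcongr
        · exact hf₀ n
        · nlinarith
    _ ≤ C * (n : ℝ) ^ (-((m + 2 : ℕ) : ℝ)) * (4 * n ^ 2) := by gcongr; exact hC n hn
    _ = 4 * C * n ^ (-(m : ℝ)) := by rw [← hpow]; ring

lemma exists_bound (hf : RapidDecay f) (hpos : ∀ n, 0 < f n) : ∃ M, 0 < M ∧ ∀ n, f n ≤ M := by
  obtain ⟨C, hC⟩ := hf 0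
  refine ⟨max C (f 0), (hpos 0).trans_le (le_max_right _ _), fun n => ?_⟩
  rcases Nat.eq_zero_or_pos n with rfl | hn
  · exact le_max_right _ _
  · have := hC n hn
    simp only [CharP.cast_eq_zero, neg_zero, rpow_zero, mul_one] at this
    exact this.trans (le_max_left _ _)

lemma exists_mul_log_le_neg_log (hf : RapidDecay f) (hpos : ∀ n, 0 < f n) (m : ℕ) :
    ∃ D, ∀ n : ℕ, 1 ≤ n → m * log n - D ≤ -log (f n) := by
  obtain ⟨C, hC⟩ := hf m
  refine ⟨log C, fun n hn => ?_⟩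
  have hn₀ : (0 : ℝ) < n := by exact_mod_cast hn
  have hC₀ : 0 < C := pos_of_mul_pos_left ((hpos n).trans_le (hC n hn)) (by positivity)
  have := log_le_log (hpos n) (hC n hn)
  rw [log_mul hC₀.ne' (by positivity), log_rpow hn₀] at this
  linarith

end RapidDecay

lemma mul_log_le_sqrt_add_sq {m x : ℝ} (hm : 0 ≤ m) (hx : 0 ≤ x) : m * log x ≤ √x + 4 * m ^ 2 := by
  have hlog : log x ≤ x ^ (1 / 4 : ℝ) / (1 / 4) := log_le_rpow_div hx (by norm_num)
  have hsqrt : √x = (x ^ (1 / 4 : ℝ)) ^ 2 := by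
    rw [sqrt_eq_rpow, ← rpow_natCast, ← rpow_mul hx]; norm_num
  nlinarith [sq_nonneg (x ^ (1 / 4 : ℝ) - 2 * m), mul_le_mul_of_nonneg_left hlog hm]

lemma List.exists_mem_lt_of_length_mul_lt {l : List ℕ} {x : ℝ} (h : l.length * x < l.sum) :
    ∃ a ∈ l, x < a := by
  apply List.exists_lt_of_sum_lt (fun _ => x) Nat.cast
  simpa [Nat.cast_list_sum] using h

section SubaddHull

instance (n : ℕ) : Nonempty {l : List ℕ // n ≤ l.sum} := ⟨⟨[n], by simp⟩⟩

noncomputable def subaddHull (U : ℕ → ℝ) (n : ℕ) : ℝ :=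
  ⨅ l : {l : List ℕ // n ≤ l.sum}, (l.1.map U).sum

variable {U : ℕ → ℝ}

lemma subaddHull_le_sum (hU : ∀ n, 0 ≤ U n) {n : ℕ} {l : List ℕ} (hl : n ≤ l.sum) :
    subaddHull U n ≤ (l.map U).sum := by
  refine ciInf_le ⟨0, ?_⟩ (⟨l, hl⟩ : {l : List ℕ // n ≤ l.sum})
  rintro _ ⟨l', rfl⟩
  exact List.sum_nonneg (by simpa using fun a _ => hU a)

lemma subaddHull_le_self (hU : ∀ n, 0 ≤ U n) (n : ℕ) : subaddHull U n ≤ U n := by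
  simpa using subaddHull_le_sum hU (l := [n]) (by simp)

lemma subaddHull_mono (hU : ∀ n, 0 ≤ U n) : Monotone (subaddHull U) := fun _ _ hab =>
  le_ciInf fun l => subaddHull_le_sum hU (hab.trans l.2)

lemma subaddHull_add_le (hU : ∀ n, 0 ≤ U n) (a b : ℕ) :
    subaddHull U (a + b) ≤ subaddHull U a + subaddHull U b :=
  le_ciInf_add_ciInf fun l₁ l₂ => by
    simpa using subaddHull_le_sum hU (l := l₁.1 ++ l₂.1) (by simpa using add_le_add l₁.2 l₂.2)

lemma mul_log_sub_le_subaddHull (hU : ∀ n, 1 ≤ U n) {m D : ℝ} (hm : 0 ≤ m)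
    (hD : ∀ n : ℕ, 1 ≤ n → 2 * m * log n - D ≤ U n) (n : ℕ) :
    m * log n - max (4 * m ^ 2) D ≤ subaddHull U n := by
  have hU₀ : ∀ n, 0 ≤ U n := fun n => zero_le_one.trans (hU n)
  refine le_ciInf fun ⟨l, hl⟩ => ?_
  rcases le_or_gt √n l.length with hlong | hshort
  · have hlen : (l.length : ℝ) ≤ (l.map U).sum := by
      simpa using List.card_nsmul_le_sum (l.map U) 1 (by simpa using fun a _ => hU a)
    linarith [mul_log_le_sqrt_add_sq hm n.cast_nonneg, le_max_left (4 * m ^ 2) D]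
  · have hn : 0 < √n := (Nat.cast_nonneg _).trans_lt hshort
    obtain ⟨a, ha, hlt⟩ : ∃ a ∈ l, √n < a := by
      refine List.exists_mem_lt_of_length_mul_lt ?_
      calc l.length * √n < √n * √n := mul_lt_mul_of_pos_right hshort hn
        _ = n := mul_self_sqrt n.cast_nonneg
        _ ≤ l.sum := by exact_mod_cast hl
    have ha₁ : 1 ≤ a := by exact_mod_cast hn.trans hlt
    have hlog : log n ≤ 2 * log a := by
      have := log_le_log hn hlt.le
      rw [log_sqrt n.cast_nonneg] at this
      linarith
    have hUa : U a ≤ (l.map U).sum :=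
      List.single_le_sum (by simpa using fun a _ => hU₀ a) _ (List.mem_map_of_mem ha)
    nlinarith [hD a ha₁, le_max_right (4 * m ^ 2) D, mul_le_mul_of_nonneg_left hlog hm]

end SubaddHull

noncomputable def decayWeight (K : ℝ) (V : ℕ → ℝ) (n : ℕ) : ℝ := K * exp (-V n) / (1 + n) ^ 2

section DecayWeight

variable {K : ℝ} {V : ℕ → ℝ}

lemma decayWeight_pos (hK : 0 < K) (n : ℕ) : 0 < decayWeight K V n := by
  unfold decayWeight; positivity

lemma decayWeight_rapidDecay (hK : 0 ≤ K)
    (hV : ∀ m : ℕ, ∃ E, ∀ n : ℕ, m * log n - E ≤ V n) : RapidDecay (decayWeight K V) := by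
  intro m
  obtain ⟨E, hE⟩ := hV m
  refine ⟨K * exp E, fun n hn => ?_⟩
  have hn₀ : (0 : ℝ) < n := by exact_mod_cast hn
  calc decayWeight K V n ≤ K * exp (-V n) :=
        div_le_self (by positivity) (one_le_pow₀ (by linarith [n.cast_nonneg (α := ℝ)]))
    _ ≤ K * exp (E + log n * -m) := by gcongr; linarith [hE n]
    _ = K * exp E * (n : ℝ) ^ (-(m : ℝ)) := by rw [exp_add, ← rpow_def_of_pos hn₀, mul_assoc]

lemma decayWeight_mul_le (hV : ∀ a b, V (a + b) ≤ V a + V b) (a b : ℕ) :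
    decayWeight K V a * decayWeight K V b ≤
      decayWeight K V (a + b) * (2 * K / (1 + a) ^ 2 + 2 * K / (1 + b) ^ 2) := by
  have hexp : exp (-V a) * exp (-V b) ≤ exp (-V (a + b)) := by
    rw [← exp_add]
    exact exp_le_exp.mpr (by linarith [hV a b])
  have hsq : (1 + ((a + b : ℕ) : ℝ)) ^ 2 ≤ 2 * (1 + a) ^ 2 + 2 * (1 + b) ^ 2 := by
    push_cast
    nlinarith [sq_nonneg ((a : ℝ) - b), a.cast_nonneg (α := ℝ), b.cast_nonneg (α := ℝ)]
  unfold decayWeight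
  calc K * exp (-V a) / (1 + a) ^ 2 * (K * exp (-V b) / (1 + b) ^ 2)
      = K ^ 2 * (exp (-V a) * exp (-V b)) / ((1 + a) ^ 2 * (1 + b) ^ 2) := by
        rw [div_mul_div_comm]; ring
    _ ≤ K ^ 2 * exp (-V (a + b)) / ((1 + a) ^ 2 * (1 + b) ^ 2) := by gcongr
    _ ≤ K ^ 2 * exp (-V (a + b)) *
          ((2 * (1 + a) ^ 2 + 2 * (1 + b) ^ 2) / (1 + ((a + b : ℕ) : ℝ)) ^ 2) /
          ((1 + a) ^ 2 * (1 + b) ^ 2) := by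
        refine div_le_div_of_nonneg_right (le_mul_of_one_le_right (by positivity) ?_)
          (by positivity)
        exact (one_le_div (by positivity)).mpr hsq
    _ = K * exp (-V (a + b)) / (1 + ((a + b : ℕ) : ℝ)) ^ 2 *
          (2 * K / (1 + a) ^ 2 + 2 * K / (1 + b) ^ 2) := by
        field_simp
        ring

lemma decayWeight_antitone (hK : 0 ≤ K) (hV : Monotone V) :
    Antitone (decayWeight K V) := fun a b hab => by
  unfold decayWeight
  gcongr
  exact hV hab

end DecayWeight

lemma summable_div_one_add_sq (c : ℝ) : Summable fun n : ℕ => c / (1 + n) ^ 2 :=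
  (((summable_nat_add_iff 1).mpr (summable_one_div_nat_pow.mpr one_lt_two)).mul_left c).congr
    fun n => by push_cast; ring

lemma reproducing_of_mul_le {g q : ℕ → ℝ} (hg : ∀ n, 0 < g n) (hanti : Antitone g)
    (hq : Summable q) (hmul : ∀ a b, g a * g b ≤ g (a + b) * (q a + q b)) :
    ∃ B : ℝ, ∀ j k : ℤ,
      Summable (fun l : ℤ => g (j - l).natAbs * g (l - k).natAbs / g (j - k).natAbs) ∧
      (∑' l : ℤ, g (j - l).natAbs * g (l - k).natAbs / g (j - k).natAbs) ≤ B := by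
  have hqℤ : Summable fun n : ℤ => q n.natAbs :=
    summable_int_iff_summable_nat_and_neg.mpr ⟨by simpa using hq, by simpa using hq⟩
  refine ⟨2 * ∑' n : ℤ, q n.natAbs, fun j k => ?_⟩
  have hle : ∀ l : ℤ, g (j - l).natAbs * g (l - k).natAbs / g (j - k).natAbs ≤
      q (j - l).natAbs + q (l - k).natAbs := fun l => by
    have hmul' := hmul (j - l).natAbs (l - k).natAbs
    have hq₀ : 0 < q (j - l).natAbs + q (l - k).natAbs :=
      pos_of_mul_pos_right ((mul_pos (hg _) (hg _)).trans_le hmul') (hg _).le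
    have htri : (j - k).natAbs ≤ (j - l).natAbs + (l - k).natAbs := by
      simpa using Int.natAbs_add_le (j - l) (l - k)
    rw [div_le_iff₀ (hg _), mul_comm (_ + _)]
    exact hmul'.trans (mul_le_mul_of_nonneg_right (hanti htri) hq₀.le)
  have hsum₁ : Summable fun l : ℤ => q (j - l).natAbs := hqℤ.comp_injective sub_right_injective
  have hsum₂ : Summable fun l : ℤ => q (l - k).natAbs := hqℤ.comp_injective sub_left_injective
  have hsum := hsum₁.add hsum₂
  have hsumm := Summable.of_nonneg_of_le
    (fun l => div_nonneg (mul_pos (hg _) (hg _)).le (hg _).le) hle hsum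
  refine ⟨hsumm, (hsumm.tsum_le_tsum hle hsum).trans_eq ?_⟩
  have hshift₁ : ∑' l : ℤ, q (j - l).natAbs = ∑' n : ℤ, q n.natAbs :=
    (Equiv.subLeft j).tsum_eq (fun n : ℤ => q n.natAbs)
  have hshift₂ : ∑' l : ℤ, q (l - k).natAbs = ∑' n : ℤ, q n.natAbs :=
    (Equiv.subRight k).tsum_eq (fun n : ℤ => q n.natAbs)
  rw [hsum₁.tsum_add hsum₂, hshift₁, hshift₂, two_mul]

/-- Any positive sequence with `f(n) = O(n^{-∞})` is dominated by a positive,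
monotonically decreasing function `g` with `g(n) = O(n^{-∞})` which is reproducing
for the lattice `ℤ ⊂ ℝ`:
`sup_{j,k ∈ ℤ} Σ_{l ∈ ℤ} g(|j−l|)·g(|l−k|)/g(|j−k|) < ∞`. -/
theorem stmt7 (f : ℕ → ℝ)
    (hpos : ∀ n, 0 < f n)
    (hdecay : ∀ m : ℕ, ∃ C : ℝ, ∀ n : ℕ, 1 ≤ n → f n ≤ C * (n : ℝ) ^ (-(m : ℝ))) :
    ∃ g : ℕ → ℝ,
      (∀ n, 0 < g n) ∧
      (∀ n, f n ≤ g n) ∧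
      (∀ n m : ℕ, n ≤ m → g m ≤ g n) ∧
      (∀ m : ℕ, ∃ C : ℝ, ∀ n : ℕ, 1 ≤ n → g n ≤ C * (n : ℝ) ^ (-(m : ℝ))) ∧
      ∃ B : ℝ, ∀ j k : ℤ,
        Summable (fun l : ℤ => g (j - l).natAbs * g (l - k).natAbs / g (j - k).natAbs) ∧
        (∑' l : ℤ, g (j - l).natAbs * g (l - k).natAbs / g (j - k).natAbs) ≤ B := by
  set h : ℕ → ℝ := fun n => f n * (1 + n) ^ 2
  have hh_pos : ∀ n, 0 < h n := fun n => mul_pos (hpos n) (by positivity)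
  have hh_decay : RapidDecay h := RapidDecay.mul_one_add_sq hdecay fun n => (hpos n).le
  obtain ⟨M, hM, hhM⟩ := hh_decay.exists_bound hh_pos
  set K := exp 1 * M
  have hK : 0 < K := by positivity
  set U : ℕ → ℝ := fun n => log (K / h n)
  have hU : ∀ n, 1 ≤ U n := fun n =>
    (le_log_iff_exp_le (div_pos hK (hh_pos n))).mpr
      ((le_div_iff₀ (hh_pos n)).mpr (mul_le_mul_of_nonneg_left (hhM n) (exp_pos 1).le))
  have hU₀ : ∀ n, 0 ≤ U n := fun n => zero_le_one.trans (hU n)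
  have hV_growth : ∀ m : ℕ, ∃ E, ∀ n : ℕ, m * log n - E ≤ subaddHull U n := fun m => by
    obtain ⟨D, hD⟩ := hh_decay.exists_mul_log_le_neg_log hh_pos (2 * m)
    refine ⟨_, mul_log_sub_le_subaddHull hU m.cast_nonneg (D := D - log K) fun n hn => ?_⟩
    have := hD n hn
    push_cast at this
    simp only [U, log_div hK.ne' (hh_pos n).ne']
    linarith
  have hg_anti := decayWeight_antitone hK.le (subaddHull_mono hU₀)
  refine ⟨decayWeight K (subaddHull U), decayWeight_pos hK, fun n => ?_, hg_anti,
    decayWeight_rapidDecay hK.le hV_growth,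
    reproducing_of_mul_le (decayWeight_pos hK) hg_anti (summable_div_one_add_sq (2 * K))
      (decayWeight_mul_le (subaddHull_add_le hU₀))⟩
  calc f n = K * exp (-U n) / (1 + n) ^ 2 := by
        rw [exp_neg, exp_log (div_pos hK (hh_pos n)), inv_div, mul_div_cancel₀ _ hK.ne',
          eq_div_iff (by positivity)]
    _ ≤ decayWeight K (subaddHull U) n := by
        unfold decayWeight
        gcongr
        exact subaddHull_le_self hU₀ n
end

section
/- Let (g'_n)_{n≥1} be a positive sequence satisfying Σ_{k=1}^{n-1} g'_k · g'_{n-k} ≤ (1/2)·g'_n for all n ≥ 2. Define a_0 = 1 and suppose (b_n)_{n≥1} satisfies b_n ≤ 2·(g'_n·a_0 + g'_{n-1}·a_1 + ... + g'_1·a_{n-1}) where a_n := 2n·g'_n for n ≥ 1. Then indeed 2·(g'_n + Σ_{k=1}^{n-1} g'_{n-k}·a_k) ≤ a_n, i.e. 2·(g'_n + Σ_{k=1}^{n-1} g'_{n-k}·2k·g'_k) ≤ 2n·g'_n for all n ≥ 1; consequently b_n ≤ 2n·g'_n. -/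
/-!
Write `S_n = ∑_{k=1}^{n-1} g'_k g'_{n-k}`. Reflecting `k ↦ n - k` shows that the weight `k` in
`∑ k g'_k g'_{n-k}` averages to `n / 2`, so with `a_k = 2k g'_k` the left-hand side equals
`2 g'_n + 2n S_n ≤ 2 g'_n + n g'_n`, which is at most `2n g'_n` once `n ≥ 2`.
-/

open Finset

theorem sum_Ico_one_sub_reflect {M : Type*} [AddCommMonoid M] (f : ℕ → M) (n : ℕ) :
    ∑ k ∈ Ico 1 n, f (n - k) = ∑ k ∈ Ico 1 n, f k := by
  rcases n with _ | n
  · simp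
  · rw [sum_Ico_reflect f 1 (by omega : n + 1 ≤ n + 1 + 1)]
    simp

theorem two_mul_sum_Ico_mul_conv {R : Type*} [CommRing R] (u : ℕ → R) (n : ℕ) :
    2 * ∑ k ∈ Ico 1 n, (k : R) * (u k * u (n - k)) = n * ∑ k ∈ Ico 1 n, u k * u (n - k) := by
  have reflected : ∑ k ∈ Ico 1 n, (k : R) * (u k * u (n - k))
      = ∑ k ∈ Ico 1 n, ((n : R) - k) * (u k * u (n - k)) := by
    rw [← sum_Ico_one_sub_reflect]
    refine sum_congr rfl fun k hk => ?_
    have hkn : k ≤ n := (mem_Ico.mp hk).2.le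
    rw [Nat.sub_sub_self hkn, Nat.cast_sub hkn]
    ring
  rw [two_mul]
  nth_rewrite 2 [reflected]
  rw [← sum_add_distrib, mul_sum]
  exact sum_congr rfl fun k _ => by ring

theorem two_mul_weighted_conv_le (g : ℕ → ℝ) {n : ℕ} (hn : 2 ≤ n) (hg : 0 ≤ g n)
    (hhalf : ∑ k ∈ Ico 1 n, g k * g (n - k) ≤ 1 / 2 * g n) :
    2 * (g n + ∑ k ∈ Ico 1 n, g (n - k) * (2 * k * g k)) ≤ 2 * n * g n := by
  have hsum : ∑ k ∈ Ico 1 n, g (n - k) * (2 * k * g k)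
      = n * ∑ k ∈ Ico 1 n, g k * g (n - k) := by
    rw [← two_mul_sum_Ico_mul_conv, mul_sum]
    exact sum_congr rfl fun k _ => by ring
  have hn' : (2 : ℝ) ≤ n := by exact_mod_cast hn
  rw [hsum]
  nlinarith [mul_le_mul_of_nonneg_left hhalf (by linarith : (0 : ℝ) ≤ n)]

/-- The key recursive estimate: if `Σ_{k=1}^{n-1} g'_k·g'_{n-k} ≤ (1/2)·g'_n` and
`a_0 = 1`, `a_n = 2n·g'_n` for `n ≥ 1`, then
`2·(g'_n·a_0 + Σ_{k=1}^{n-1} g'_{n-k}·a_k) ≤ a_n = 2n·g'_n`; consequently any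
sequence `b` with `b_n ≤ 2·Σ_{k=0}^{n-1} g'_{n-k}·a_k` satisfies `b_n ≤ 2n·g'_n`. -/
theorem stmt8 (g' b a : ℕ → ℝ)
    (hpos : ∀ n, 1 ≤ n → 0 < g' n)
    (hhalf : ∀ n, 2 ≤ n → ∑ k ∈ Finset.Ico 1 n, g' k * g' (n - k) ≤ (1 / 2) * g' n)
    (ha0 : a 0 = 1)
    (ha : ∀ n, 1 ≤ n → a n = 2 * n * g' n)
    (hb : ∀ n, 1 ≤ n → b n ≤ 2 * ∑ k ∈ Finset.range n, g' (n - k) * a k) :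
    (∀ n, 1 ≤ n →
      2 * (g' n * a 0 + ∑ k ∈ Finset.Ico 1 n, g' (n - k) * a k) ≤ 2 * n * g' n) ∧
    (∀ n, 1 ≤ n → b n ≤ 2 * n * g' n) := by
  have key : ∀ n, 1 ≤ n →
      2 * (g' n * a 0 + ∑ k ∈ Ico 1 n, g' (n - k) * a k) ≤ 2 * n * g' n := by
    intro n hn
    rcases hn.eq_or_lt with rfl | hn2
    · simp [ha0]
    · rw [ha0, mul_one, sum_congr rfl fun k hk => by rw [ha k (mem_Ico.mp hk).1]]
      exact two_mul_weighted_conv_le g' hn2 (hpos n hn).le (hhalf n hn2)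
  refine ⟨key, fun n hn => ?_⟩
  calc b n ≤ 2 * ∑ k ∈ range n, g' (n - k) * a k := hb n hn
    _ = 2 * (g' n * a 0 + ∑ k ∈ Ico 1 n, g' (n - k) * a k) := by
      rw [sum_range_eq_add_Ico _ hn, Nat.sub_zero]
    _ ≤ 2 * n * g' n := key n hn
end

section
/- Let A₊ and A₋ be subsets of ℝ² contained in two non-intersecting closed cones with common apex p. If F₊ ∈ 𝒞⁰_{A₊} and F₋ ∈ 𝒞⁰_{A₋} satisfy F₋ + F₊ = 0 (as 0-chains, pointwise in j and s), then F₊ ∈ 𝒞⁰_{p} and F₋ ∈ 𝒞⁰_{p}, i.e. ‖(F₊)_j‖ ≤ h(|j−p|) for some MDP h = O(r^{-∞}). -/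
/-!
By compactness the two closed sets of directions are at some distance `δ > 0`, i.e. the cones
meet at an angle bounded away from zero, so points `a`, `b` of the two cones satisfy `|a - p| + |b - p| ≤ (2/δ) |a - b|`. Hence a site `j` far from `p` is
far from `A₊` or far from `A₋`: `|j - p| ≤ (1 + 2/δ) · max(dist(j, A₊), dist(j, A₋))`. Since
`‖(F₊)_j‖ = ‖(F₋)_j‖`, whichever of the two support bounds applies controls both chains at `j`,
and `r ↦ (g₊ + g₋)(r / (1 + 2/δ))` is again an MDP of rapid decay.
-/

/-- `g(r) = O(r^{-∞})`. -/
def IsODecay (g : ℝ → ℝ) : Prop :=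
  ∀ n : ℕ, ∃ C : ℝ, ∀ r : ℝ, 1 ≤ r → g r ≤ C * r ^ (-(n : ℝ))

/-- A 0-chain `F(s) = Σ_j F(s)_j` is approximately supported near a region whose
distance function on sites is `d`: `‖F(s)_j‖ ≤ g(d j)` for an MDP `g = O(r^{-∞})`. -/
def SupportedNear {𝒜 Λ : Type*} [NormedRing 𝒜] (d : Λ → ℝ) (F : ℝ → Λ → 𝒜) : Prop :=
  ∃ g : ℝ → ℝ, (∀ r : ℝ, 0 < g r) ∧ (∀ r s : ℝ, r ≤ s → g s ≤ g r) ∧ IsODecay g ∧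
    ∀ (s : ℝ) (j : Λ), ‖F s j‖ ≤ g (d j)

/-- The (closed) cone in the plane `ℝ² ≅ ℂ` with apex `p` over a set `S` of unit
directions. -/
def coneOver (p : ℂ) (S : Set ℂ) : Set ℂ :=
  {z : ℂ | ∃ t : ℝ, 0 ≤ t ∧ ∃ v ∈ S, z = p + t • v}

open Metric

section ConeGeometry

variable {E : Type*} [NormedAddCommGroup E] [InnerProductSpace ℝ E]

lemma norm_smul_sub_smul_sq {u v : E} (hu : ‖u‖ = 1) (hv : ‖v‖ = 1) (t s : ℝ) :
    ‖t • u - s • v‖ ^ 2 = (t - s) ^ 2 + t * s * ‖u - v‖ ^ 2 := by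
  rw [norm_sub_sq_real, norm_sub_sq_real, norm_smul, norm_smul, real_inner_smul_left,
    real_inner_smul_right, hu, hv, Real.norm_eq_abs, Real.norm_eq_abs, mul_one, mul_one, sq_abs,
    sq_abs]
  ring

lemma mul_add_le_norm_smul_sub_smul {u v : E} (hu : ‖u‖ = 1) (hv : ‖v‖ = 1) {δ t s : ℝ}
    (hδ0 : 0 ≤ δ) (hδ : δ ≤ ‖u - v‖) (ht : 0 ≤ t) (hs : 0 ≤ s) :
    δ / 2 * (t + s) ≤ ‖t • u - s • v‖ := by
  refine le_of_sq_le_sq ?_ (norm_nonneg _)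
  have huv : ‖u - v‖ ≤ 2 := (norm_sub_le u v).trans (by rw [hu, hv]; norm_num)
  have hδsq : δ ^ 2 ≤ ‖u - v‖ ^ 2 := pow_le_pow_left₀ hδ0 hδ 2
  have hδ4 : δ ^ 2 ≤ 4 := hδsq.trans (by nlinarith [norm_nonneg (u - v)])
  rw [norm_smul_sub_smul_sq hu hv]
  -- `(δ/2)² (t + s)² = (δ²/4) (t - s)² + δ² ts`
  nlinarith [mul_le_mul_of_nonneg_left hδsq (mul_nonneg ht hs),
    mul_le_mul_of_nonneg_right hδ4 (sq_nonneg (t - s))]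

end ConeGeometry

lemma dist_add_dist_le_of_mem_coneOver {p : ℂ} {S T : Set ℂ} (hS : S ⊆ sphere 0 1)
    (hT : T ⊆ sphere 0 1) {δ : ℝ} (hδ : 0 < δ) (hST : ∀ u ∈ S, ∀ v ∈ T, δ ≤ dist u v) {a b : ℂ}
    (ha : a ∈ coneOver p S) (hb : b ∈ coneOver p T) :
    dist a p + dist b p ≤ 2 / δ * dist a b := by
  obtain ⟨t, ht, u, hu, rfl⟩ := ha
  obtain ⟨s, hs, v, hv, rfl⟩ := hb
  have hu1 : ‖u‖ = 1 := mem_sphere_zero_iff_norm.1 (hS hu)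
  have hv1 : ‖v‖ = 1 := mem_sphere_zero_iff_norm.1 (hT hv)
  have hbound :=
    mul_add_le_norm_smul_sub_smul hu1 hv1 hδ.le (dist_eq_norm u v ▸ hST u hu v hv) ht hs
  rw [dist_self_add_left, dist_self_add_left, dist_add_left, dist_eq_norm, norm_smul, norm_smul,
    Real.norm_eq_abs, Real.norm_eq_abs, abs_of_nonneg ht, abs_of_nonneg hs, hu1, hv1, mul_one,
    mul_one, div_mul_eq_mul_div, le_div_iff₀ hδ]
  linarith

lemma IsCompact.exists_pos_forall_le_dist {X : Type*} [PseudoMetricSpace X] {s t : Set X}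
    (hs : IsCompact s) (ht : IsClosed t) (hst : Disjoint s t) :
    ∃ δ > 0, ∀ x ∈ s, ∀ y ∈ t, δ ≤ dist x y := by
  obtain ⟨r, hr, hrst⟩ := Metric.exists_pos_forall_lt_edist hs ht hst
  refine ⟨r, hr, fun x hx y hy => ?_⟩
  have h := hrst x hx y hy
  rw [edist_nndist, ENNReal.coe_lt_coe] at h
  exact (NNReal.coe_lt_coe.2 h).le

lemma div_le_infDist_or_div_le_infDist {X : Type*} [PseudoMetricSpace X] {A B : Set X}
    (hA : A.Nonempty) (hB : B.Nonempty) {p : X} {C : ℝ} (hC : 0 ≤ C)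
    (hAB : ∀ a ∈ A, ∀ b ∈ B, dist a p + dist b p ≤ C * dist a b) (z : X) :
    dist z p / (1 + C) ≤ infDist z A ∨ dist z p / (1 + C) ≤ infDist z B := by
  set r := dist z p / (1 + C)
  have hpair : ∀ a ∈ A, ∀ b ∈ B, 2 * r ≤ dist z a + dist z b := by
    intro a ha b hb
    rw [← mul_div_assoc, div_le_iff₀ (by linarith)]
    nlinarith [hAB a ha b hb, dist_triangle_left a b z, dist_triangle z a p, dist_triangle z b p,
      dist_nonneg (x := z) (y := a), dist_nonneg (x := z) (y := b)]
  have hA' : ∀ b ∈ B, 2 * r - dist z b ≤ infDist z A := fun b hb =>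
    (le_infDist hA).2 fun a ha => by linarith [hpair a ha b hb]
  have hB' : 2 * r - infDist z A ≤ infDist z B :=
    (le_infDist hB).2 fun b hb => by linarith [hA' b hb]
  by_contra! h
  linarith [h.1, h.2]

lemma IsODecay.add {f g : ℝ → ℝ} (hf : IsODecay f) (hg : IsODecay g) : IsODecay (f + g) := by
  intro n
  obtain ⟨C, hC⟩ := hf n
  obtain ⟨D, hD⟩ := hg n
  exact ⟨C + D, fun r hr => by
    simpa only [Pi.add_apply, add_mul] using add_le_add (hC r hr) (hD r hr)⟩

lemma IsODecay.comp_div {g : ℝ → ℝ} (hg : Antitone g) (hdec : IsODecay g) {L : ℝ} (hL : 0 < L) :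
    IsODecay (fun r => g (r / L)) := by
  intro n
  obtain ⟨C, hC⟩ := hdec n
  refine ⟨(max C 0 + |g (1 / L)|) * L ^ (n : ℝ), fun r hr => ?_⟩
  have hr0 : 0 < r := one_pos.trans_le hr
  have hscale : L ^ (n : ℝ) * r ^ (-(n : ℝ)) = (r / L) ^ (-(n : ℝ)) := by
    rw [Real.div_rpow hr0.le hL.le, Real.rpow_neg hr0.le, Real.rpow_neg (by positivity),
      div_inv_eq_mul, mul_comm]
  have hmax : 0 ≤ max C 0 * (L ^ (n : ℝ) * r ^ (-(n : ℝ))) := by positivity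
  have habs : 0 ≤ |g (1 / L)| * (L ^ (n : ℝ) * r ^ (-(n : ℝ))) := by positivity
  rw [add_mul, add_mul, mul_assoc, mul_assoc]
  rcases le_or_gt L r with hLr | hrL
  · have hfar : 1 ≤ r / L := (one_le_div hL).2 hLr
    calc g (r / L) ≤ C * (r / L) ^ (-(n : ℝ)) := hC _ hfar
      _ ≤ max C 0 * (L ^ (n : ℝ) * r ^ (-(n : ℝ))) := by
          rw [hscale]; gcongr; exact le_max_left _ _
      _ ≤ _ := le_add_of_nonneg_right habs
  · have hone : 1 ≤ L ^ (n : ℝ) * r ^ (-(n : ℝ)) := by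
      rw [hscale]
      exact Real.one_le_rpow_of_pos_of_le_one_of_nonpos (by positivity)
        ((div_le_one hL).2 hrL.le) (by simp)
    calc g (r / L) ≤ g (1 / L) := hg (div_le_div_of_nonneg_right hr hL.le)
      _ ≤ |g (1 / L)| * (L ^ (n : ℝ) * r ^ (-(n : ℝ))) :=
          (le_abs_self _).trans (le_mul_of_one_le_right (abs_nonneg _) hone)
      _ ≤ _ := le_add_of_nonneg_left hmax

lemma SupportedNear.of_norm_le {𝒜 Λ : Type*} [NormedRing 𝒜] {d d₁ d₂ : Λ → ℝ}
    {F G : ℝ → Λ → 𝒜} {L : ℝ} (hL : 0 < L) (hd : ∀ j, d j / L ≤ d₁ j ∨ d j / L ≤ d₂ j)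
    (hF : SupportedNear d₁ F) (hG : SupportedNear d₂ G) (hFG : ∀ s j, ‖F s j‖ ≤ ‖G s j‖) :
    SupportedNear d F := by
  obtain ⟨g₁, hg₁pos, hg₁anti, hg₁dec, hFg₁⟩ := hF
  obtain ⟨g₂, hg₂pos, hg₂anti, hg₂dec, hGg₂⟩ := hG
  have hanti : Antitone (g₁ + g₂) :=
    Antitone.add (fun r s h => hg₁anti r s h) (fun r s h => hg₂anti r s h)
  refine ⟨fun r => (g₁ + g₂) (r / L), fun r => add_pos (hg₁pos _) (hg₂pos _),
    fun r s hrs => hanti (div_le_div_of_nonneg_right hrs hL.le),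
    (hg₁dec.add hg₂dec).comp_div hanti hL, fun s j => ?_⟩
  rcases hd j with h | h
  · calc ‖F s j‖ ≤ g₁ (d₁ j) := hFg₁ s j
      _ ≤ g₁ (d j / L) := hg₁anti _ _ h
      _ ≤ (g₁ + g₂) (d j / L) := le_add_of_nonneg_right (hg₂pos _).le
  · calc ‖F s j‖ ≤ ‖G s j‖ := hFG s j
      _ ≤ g₂ (d₂ j) := hGg₂ s j
      _ ≤ g₂ (d j / L) := hg₂anti _ _ h
      _ ≤ (g₁ + g₂) (d j / L) := le_add_of_nonneg_left (hg₁pos _).le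

/-- If `A₊`, `A₋` lie inside two non-intersecting closed cones with common apex
`p`, and the 0-chains `F₊ ∈ 𝒞⁰_{A₊}`, `F₋ ∈ 𝒞⁰_{A₋}` satisfy `F₋ + F₊ = 0`, then
both `F₊` and `F₋` are localized at the point `p`: `F₊, F₋ ∈ 𝒞⁰_p`. -/
theorem stmt12 {𝒜 Λ : Type*} [NormedRing 𝒜] (ι : Λ → ℂ) (p : ℂ)
    (Sp Sm : Set ℂ)
    (hSpcl : IsClosed Sp) (hSmcl : IsClosed Sm)
    (hSp : Sp ⊆ Metric.sphere (0 : ℂ) 1) (hSm : Sm ⊆ Metric.sphere (0 : ℂ) 1)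
    (hdisj : Disjoint Sp Sm)
    (Ap Am : Set ℂ) (hApne : Ap.Nonempty) (hAmne : Am.Nonempty)
    (hAp : Ap ⊆ coneOver p Sp) (hAm : Am ⊆ coneOver p Sm)
    (Fp Fm : ℝ → Λ → 𝒜)
    (hFp : SupportedNear (fun j => Metric.infDist (ι j) Ap) Fp)
    (hFm : SupportedNear (fun j => Metric.infDist (ι j) Am) Fm)
    (hsum : ∀ (s : ℝ) (j : Λ), Fm s j + Fp s j = 0) :
    SupportedNear (fun j => dist (ι j) p) Fp ∧
    SupportedNear (fun j => dist (ι j) p) Fm := by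
  obtain ⟨δ, hδ, hsep⟩ :=
    ((isCompact_sphere 0 1).of_isClosed_subset hSpcl hSp).exists_pos_forall_le_dist hSmcl hdisj
  have hL : 0 < 1 + 2 / δ := by positivity
  have hsplit (j : Λ) := div_le_infDist_or_div_le_infDist hApne hAmne (by positivity)
    (fun a ha b hb => dist_add_dist_le_of_mem_coneOver hSp hSm hδ hsep (hAp ha) (hAm hb)) (ι j)
  have hnorm (s : ℝ) (j : Λ) : ‖Fp s j‖ = ‖Fm s j‖ := by
    rw [eq_neg_of_add_eq_zero_right (hsum s j), norm_neg]
  exact ⟨hFp.of_norm_le hL hsplit hFm fun s j => (hnorm s j).le,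
    hFm.of_norm_le hL (fun j => (hsplit j).symm) hFp fun s j => (hnorm s j).ge⟩
end

section
/- Let G be a finite group and ω a normalized U(1)-valued 3-cocycle. For each g ∈ G define operators on ℂ[G]: K'(g)⟨l| = ⟨lg| (right translation) and, on ℂ[G]⊗ℂ[G], the diagonal K''(g): (⟨l⟩⊗⟨m|)·K''(g) = (⟨l|⊗⟨m|)·ω(l m⁻¹, m, g). Set U(g) := (product over the chain of) K''(g)·K'(g) acting on a finite chain ℂ[G]^{⊗N} with K''(g) acting on consecutive pairs. Then U(g)U(h)U(gh)⁻¹ acts diagonally, multiplying the basis vector ⟨l₁|⊗⋯⊗⟨l_N| by Π_{x=1}^{N-1} ω(l_x, g, h)/ω(l_{x+1}, g, h) = ω(l₁,g,h)/ω(l_N,g,h). -/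
/-- A U(1)-valued 3-cocycle on `G` (trivial action). -/
def IsCocycle {G : Type*} [Group G] (ω : G → G → G → Circle) : Prop :=
  ∀ g h k l : G, ω h k l * ω g (h * k) l * ω g h k = ω (g * h) k l * ω g h (k * l)

/-- The truncated symmetry action `U(g) = (∏ K''(g))·K'(g)` on a finite chain of
`N+1` copies of `ℂ[G]`: a vector with coefficients `f` on the basis indexed by
`l : Fin (N+1) → G` is sent to the vector whose coefficient at `l` is the product
of the link phases `ω(l_x l_{x+1}⁻¹, l_{x+1}, g)` times `f` evaluated at the
right-translated configuration. -/
noncomputable def truncatedAction {G : Type*} [Group G] (ω : G → G → G → Circle) (N : ℕ)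
    (g : G) (f : (Fin (N + 1) → G) → ℂ) : (Fin (N + 1) → G) → ℂ :=
  fun l =>
    (∏ x : Fin N, ((ω (l x.castSucc * (l x.succ)⁻¹) (l x.succ) g : Circle) : ℂ)) *
      f (fun x => l x * g)

/-!
For each link `(l_x, l_{x+1})` the cocycle identity at `(l_x l_{x+1}⁻¹, l_{x+1}, g, h)` says that
the phase of `U(g)U(h)` on that link is the phase of `U(gh)` times `ω(l_x,g,h)/ω(l_{x+1},g,h)`;
these correction factors telescope along the chain.
-/

lemma Fin.prod_univ_castSucc_div_succ {M : Type*} [CommGroup M] {n : ℕ}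
    (f : Fin (n + 1) → M) :
    ∏ i : Fin n, f i.castSucc / f i.succ = f 0 / f (Fin.last n) := by
  induction n with
  | zero => simp
  | succ n ih =>
    have ih' := ih (f ∘ Fin.castSucc)
    simp only [Function.comp_apply, ← Fin.succ_castSucc, Fin.castSucc_zero] at ih'
    rw [Fin.prod_univ_castSucc, ih', Fin.succ_last, div_mul_div_cancel]

lemma IsCocycle.mul_eq_div_mul {G : Type*} [Group G] {ω : G → G → G → Circle}
    (hω : IsCocycle ω) (a b g h : G) :
    ω a b g * ω a (b * g) h = ω (a * b) g h / ω b g h * ω a b (g * h) := by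
  rw [div_mul_eq_mul_div, eq_div_iff_mul_eq', ← hω]
  ac_rfl

namespace truncatedAction

variable {G : Type*} [Group G] (ω : G → G → G → Circle) {N : ℕ}

noncomputable def linkPhase (g : G) (l : Fin (N + 1) → G) : Circle :=
  ∏ x : Fin N, ω (l x.castSucc * (l x.succ)⁻¹) (l x.succ) g

lemma apply (g : G) (f : (Fin (N + 1) → G) → ℂ) (l : Fin (N + 1) → G) :
    truncatedAction ω N g f l = (linkPhase ω g l : ℂ) * f (fun x => l x * g) := by
  rw [truncatedAction, linkPhase]
  exact congrArg (· * f _) (map_prod Circle.coeHom _ _).symm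

variable {ω}

lemma linkPhase_mul_linkPhase (hω : IsCocycle ω) (g h : G) (l : Fin (N + 1) → G) :
    linkPhase ω g l * linkPhase ω h (fun x => l x * g)
      = ω (l 0) g h / ω (l (Fin.last N)) g h * linkPhase ω (g * h) l := by
  have link : ∀ a b : G, ω (a * b⁻¹) b g * ω (a * g * (b * g)⁻¹) (b * g) h
      = ω a g h / ω b g h * ω (a * b⁻¹) b (g * h) := fun a b => by
    simpa [mul_assoc] using hω.mul_eq_div_mul (a * b⁻¹) b g h
  simp only [linkPhase, ← Finset.prod_mul_distrib, link]
  rw [Finset.prod_mul_distrib, Fin.prod_univ_castSucc_div_succ (fun x => ω (l x) g h)]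

end truncatedAction

theorem stmt17_general {G : Type*} [Group G] (ω : G → G → G → Circle)
    (hω : IsCocycle ω)
    (N : ℕ) (g h : G) (f : (Fin (N + 1) → G) → ℂ) (l : Fin (N + 1) → G) :
    truncatedAction ω N g (truncatedAction ω N h f) l
      = (((ω (l 0) g h : Circle) : ℂ) / ((ω (l (Fin.last N)) g h : Circle) : ℂ)) *
          truncatedAction ω N (g * h) f l := by
  simp only [truncatedAction.apply, mul_assoc]
  rw [← mul_assoc, ← Circle.coe_mul, truncatedAction.linkPhase_mul_linkPhase hω]
  push_cast
  ring

/-- `U(g)U(h)U(gh)⁻¹` is diagonal: `U(g)U(h)` differs from `U(gh)` by the diagonal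
phase `∏_{x} ω(l_x,g,h)/ω(l_{x+1},g,h) = ω(l_first,g,h)/ω(l_last,g,h)` (telescoping). -/
theorem stmt17 {G : Type*} [Group G] [Fintype G] (ω : G → G → G → Circle)
    (hω : IsCocycle ω)
    (hnorm : ∀ g h k : G, g = 1 ∨ h = 1 ∨ k = 1 → ω g h k = 1)
    (N : ℕ) (g h : G) (f : (Fin (N + 1) → G) → ℂ) (l : Fin (N + 1) → G) :
    truncatedAction ω N g (truncatedAction ω N h f) l
      = (((ω (l 0) g h : Circle) : ℂ) / ((ω (l (Fin.last N)) g h : Circle) : ℂ)) *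
          truncatedAction ω N (g * h) f l :=
  stmt17_general ω hω N g h f l
end
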